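/- arXiv:2311.00352 — 3 statements merged into one kernel-verified Lean document; each statement's English description precedes it below -/
import Mathlib

section
/- Every finite meta-Nil-Hamiltonian group is soluble. -/
/-- A group is *minimal non-nilpotent* if it is not nilpotent but every proper
subgroup of it is nilpotent. -/
def MinimalNonNilpotent (G : Type*) [Group G] : Prop :=
  ¬ Group.IsNilpotent G ∧ ∀ H : Subgroup G, H ≠ ⊤ → Group.IsNilpotent H

/-- A group is *biminimal non-nilpotent* if it is neither nilpotent nor minimal
non-nilpotent, but every proper subgroup of it is nilpotent or minimal non-nilpotent. -/
def BiminimalNonNilpotent (G : Type*) [Group G] : Prop :=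
  ¬ Group.IsNilpotent G ∧ ¬ MinimalNonNilpotent G ∧
    ∀ H : Subgroup G, H ≠ ⊤ → (Group.IsNilpotent H ∨ MinimalNonNilpotent H)

/-- A group is *para-Nil-Hamiltonian* if it is not nilpotent and every non-normal
subgroup of it is either nilpotent or minimal non-nilpotent. -/
def ParaNilHamiltonian (G : Type*) [Group G] : Prop :=
  ¬ Group.IsNilpotent G ∧
    ∀ H : Subgroup G, ¬ H.Normal → (Group.IsNilpotent H ∨ MinimalNonNilpotent H)

/-- A group is *meta-Nil-Hamiltonian* if every non-nilpotent subgroup of it is normal. -/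
def MetaNilHamiltonian (G : Type*) [Group G] : Prop :=
  ∀ H : Subgroup G, ¬ Group.IsNilpotent H → H.Normal

/-- A group is *locally graded* if every non-trivial finitely generated subgroup of it
contains a proper subgroup of finite index. -/
def LocallyGraded (G : Type*) [Group G] : Prop :=
  ∀ H : Subgroup G, H ≠ ⊥ → Group.FG H → ∃ K : Subgroup H, K ≠ ⊤ ∧ K.FiniteIndex

/-- A group is abelian if its multiplication commutes. -/
def Abelian (G : Type*) [Group G] : Prop := ∀ a b : G, a * b = b * a

/-- A group is *minimal non-abelian* if it is not abelian but every proper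
subgroup of it is abelian. -/
def MinimalNonAbelian (G : Type*) [Group G] : Prop :=
  ¬ Abelian G ∧ ∀ H : Subgroup G, H ≠ ⊤ → Abelian H

/-- A group is *biminimal non-abelian* if it is neither abelian nor minimal non-abelian,
but every proper subgroup of it is abelian or minimal non-abelian. -/
def BiminimalNonAbelian (G : Type*) [Group G] : Prop :=
  ¬ Abelian G ∧ ¬ MinimalNonAbelian G ∧
    ∀ H : Subgroup G, H ≠ ⊤ → (Abelian H ∨ MinimalNonAbelian H)

/-- A group is *parahamiltonian* if it is not abelian and every non-normal subgroup
of it is either abelian or minimal non-abelian. -/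
def Parahamiltonian (G : Type*) [Group G] : Prop :=
  ¬ Abelian G ∧ ∀ H : Subgroup G, ¬ H.Normal → (Abelian H ∨ MinimalNonAbelian H)

/-- A group is *locally nilpotent* if every finitely generated subgroup of it is nilpotent. -/
def LocallyNilpotent (G : Type*) [Group G] : Prop :=
  ∀ H : Subgroup G, Group.FG H → Group.IsNilpotent H

/-!
Meta-Nil-Hamiltonicity passes to subgroups and quotients, so a minimal counterexample is a
non-abelian simple group. There a non-nilpotent proper subgroup would be normal, so every proper
subgroup is nilpotent, and Schmidt's argument applies. By the normalizer condition in the nilpotent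
maximal subgroups, two distinct maximal subgroups meet trivially (a maximal nontrivial intersection
`D` would have its normalizer inside a third maximal subgroup meeting both in more than `D`), and
every maximal subgroup `M` is self-normalizing. Hence the conjugates of `M` cover exactly
`|G| - |G : M| ≥ |G| / 2` non-identity elements: one conjugacy class of maximal subgroups leaves
elements uncovered, two classes cover more than `|G| - 1`.
-/

open Subgroup MulAction Pointwise

namespace MetaNilHamiltonian

variable {G H : Type*} [Group G] [Group H]

theorem of_injective (hG : MetaNilHamiltonian G) (f : H →* G) (hf : Function.Injective f) :
    MetaNilHamiltonian H := by
  intro K hK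
  have hmap : ¬ Group.IsNilpotent (K.map f) := fun _ =>
    hK (Group.nilpotent_of_mulEquiv (K.equivMapOfInjective f hf).symm)
  simpa only [comap_map_eq_self_of_injective hf] using (hG _ hmap).comap f

theorem of_surjective (hG : MetaNilHamiltonian G) (f : G →* H) (hf : Function.Surjective f) :
    MetaNilHamiltonian H := by
  intro K hK
  have hcomap : ¬ Group.IsNilpotent (K.comap f) := fun _ =>
    hK (Group.nilpotent_of_surjective _ (f.subgroupComap_surjective_of_surjective K hf))
  simpa only [map_comap_eq_self_of_surjective hf] using (hG _ hcomap).map f hf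

theorem isNilpotent_of_ne_top [IsSimpleGroup G] (hG : MetaNilHamiltonian G) {K : Subgroup G}
    (hK : K ≠ ⊤) : Group.IsNilpotent K := by
  by_contra h
  obtain rfl | rfl := IsSimpleGroup.eq_bot_or_eq_top_of_normal K (hG K h)
  · exact h Group.isNilpotent_of_subsingleton
  · exact hK rfl

end MetaNilHamiltonian

universe u

theorem isSolvable_of_forall_isSimpleGroup {P : ∀ (G : Type u) [Group G], Prop}
    (normal : ∀ {G : Type u} [Group G] (N : Subgroup G), N.Normal → P G → P N)
    (quotient : ∀ {G : Type u} [Group G] (N : Subgroup G) [N.Normal], P G → P (G ⧸ N))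
    (simple : ∀ {G : Type u} [Group G] [Finite G] [IsSimpleGroup G], P G → Group.IsSolvable G)
    {G : Type u} [Group G] [Finite G] (hG : P G) : Group.IsSolvable G := by
  induction hn : Nat.card G using Nat.strong_induction_on generalizing G with
  | _ n ih =>
    subst hn
    cases subsingleton_or_nontrivial G
    · infer_instance
    by_cases hs : IsSimpleGroup G
    · exact simple hG
    obtain ⟨N, hN, hbot, htop⟩ : ∃ N : Subgroup G, N.Normal ∧ N ≠ ⊥ ∧ N ≠ ⊤ := by
      by_contra! h
      exact hs ⟨fun N hN => or_iff_not_imp_left.2 (h N hN)⟩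
    have hN_lt : Nat.card N < Nat.card G := by
      rw [← N.index_mul_card]
      exact lt_mul_of_one_lt_left Nat.card_pos (one_lt_index_of_ne_top htop)
    have hQ_lt : Nat.card (G ⧸ N) < Nat.card G := by
      rw [← N.card_mul_index]
      exact lt_mul_of_one_lt_left (Nat.pos_of_ne_zero index_ne_zero_of_finite)
        ((one_lt_card_iff_ne_bot N).2 hbot)
    have := ih _ hN_lt (normal N hN hG) rfl
    have := ih _ hQ_lt (quotient N hG) rfl
    exact (Group.isSolvable_iff_subgroup_quotient N).2 ⟨‹_›, ‹_›⟩

section Counting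

variable {G : Type*} [Group G]

theorem Subgroup.card_filter_mem_erase_one [Fintype G] [DecidableEq G] (M : Subgroup G)
    [DecidablePred (· ∈ M)] : ((Finset.univ.filter (· ∈ M)).erase 1).card = Nat.card M - 1 := by
  rw [Finset.card_erase_of_mem (by simp), ← Fintype.card_subtype, Nat.card_eq_fintype_card]

theorem sum_card_sub_one_le_of_pairwise_inf_eq_bot [Finite G] {T : Finset (Subgroup G)}
    (hT : (T : Set (Subgroup G)).Pairwise fun M K => M ⊓ K = ⊥) :
    ∑ M ∈ T, (Nat.card M - 1) ≤ Nat.card G - 1 := by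
  classical
  have := Fintype.ofFinite G
  let E : Subgroup G → Finset G := fun M => (Finset.univ.filter (· ∈ M)).erase 1
  have hdisj : (T : Set (Subgroup G)).PairwiseDisjoint E := fun M hM K hK hne => by
    refine Finset.disjoint_left.2 fun x hxM hxK => ?_
    simp only [E, Finset.mem_erase, Finset.mem_filter, Finset.mem_univ, true_and] at hxM hxK
    exact hxM.1 (by simpa [hT hM hK hne] using mem_inf.2 ⟨hxM.2, hxK.2⟩)
  calc ∑ M ∈ T, (Nat.card M - 1) = (T.biUnion E).card := by
        simp only [Finset.card_biUnion hdisj, E, card_filter_mem_erase_one]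
    _ ≤ (Finset.univ.erase 1).card := Finset.card_le_card fun x hx => by
        obtain ⟨M, -, hx⟩ := Finset.mem_biUnion.1 hx
        exact Finset.mem_erase.2 ⟨(Finset.mem_erase.1 hx).1, Finset.mem_univ x⟩
    _ = Nat.card G - 1 := by simp [Nat.card_eq_fintype_card]

theorem card_sub_one_le_sum_of_forall_mem [Finite G] {T : Finset (Subgroup G)}
    (hT : ∀ x : G, x ≠ 1 → ∃ M ∈ T, x ∈ M) :
    Nat.card G - 1 ≤ ∑ M ∈ T, (Nat.card M - 1) := by
  classical
  have := Fintype.ofFinite G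
  let E : Subgroup G → Finset G := fun M => (Finset.univ.filter (· ∈ M)).erase 1
  calc Nat.card G - 1 = (Finset.univ.erase 1).card := by simp [Nat.card_eq_fintype_card]
    _ ≤ (T.biUnion E).card := Finset.card_le_card fun x hx => by
        obtain ⟨M, hM, hxM⟩ := hT x (Finset.mem_erase.1 hx).1
        exact Finset.mem_biUnion.2 ⟨M, hM, by simpa [E, hxM] using (Finset.mem_erase.1 hx).1⟩
    _ ≤ ∑ M ∈ T, (Nat.card M - 1) := by
        simpa only [E, card_filter_mem_erase_one] using Finset.card_biUnion_le (s := T) (t := E)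

theorem two_mul_index_le_card [Finite G] {M : Subgroup G} (hM : M ≠ ⊥) :
    2 * M.index ≤ Nat.card G := by
  rw [← M.card_mul_index]
  exact Nat.mul_le_mul_right _ ((one_lt_card_iff_ne_bot M).2 hM)

theorem index_stabilizer_conjAct (H : Subgroup G) :
    (stabilizer (ConjAct G) H).index = (normalizer (H : Set G)).index := by
  have : stabilizer (ConjAct G) H =
      (normalizer (H : Set G)).comap (ConjAct.ofConjAct : ConjAct G ≃* G).toMonoidHom := by
    ext g
    exact conjAct_pointwise_smul_iff (g := ConjAct.ofConjAct g)
  rw [this, index_comap_of_surjective _ ConjAct.ofConjAct.surjective]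

variable [Finite G]

noncomputable def Subgroup.conjugatesFinset (H : Subgroup G) : Finset (Subgroup G) :=
  (orbit (ConjAct G) H).toFinite.toFinset

theorem Subgroup.mem_conjugatesFinset {H K : Subgroup G} :
    K ∈ H.conjugatesFinset ↔ K ∈ orbit (ConjAct G) H :=
  Set.Finite.mem_toFinset _

theorem Subgroup.disjoint_conjugatesFinset {H K : Subgroup G} (h : K ∉ H.conjugatesFinset) :
    Disjoint H.conjugatesFinset K.conjugatesFinset := by
  refine Finset.disjoint_left.2 fun L hH hK => h (mem_conjugatesFinset.2 ?_)
  have hL : orbit (ConjAct G) L = orbit (ConjAct G) H := orbit_eq_iff.2 (mem_conjugatesFinset.1 hH)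
  have hL' : orbit (ConjAct G) L = orbit (ConjAct G) K := orbit_eq_iff.2 (mem_conjugatesFinset.1 hK)
  exact hL ▸ hL' ▸ mem_orbit_self K

theorem Subgroup.sum_conjugatesFinset_card_sub_one (H : Subgroup G) :
    ∑ K ∈ H.conjugatesFinset, (Nat.card K - 1) =
      (normalizer (H : Set G)).index * (Nat.card H - 1) := by
  have hcard : ∀ K ∈ H.conjugatesFinset, Nat.card K - 1 = Nat.card H - 1 := by
    intro K hK
    obtain ⟨g, rfl⟩ := mem_conjugatesFinset.1 hK
    rw [Nat.card_congr (equivSMul g H).toEquiv.symm]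
  rw [Finset.sum_congr rfl hcard, Finset.sum_const, smul_eq_mul, ← index_stabilizer_conjAct,
    index_stabilizer, Set.ncard_eq_toFinset_card _ (Set.toFinite _)]
  rfl

theorem IsCoatom.of_mem_conjugatesFinset {M K : Subgroup G} (hM : IsCoatom M)
    (hK : K ∈ M.conjugatesFinset) : IsCoatom K := by
  obtain ⟨g, rfl⟩ := mem_conjugatesFinset.1 hK
  exact (MulDistribMulAction.toMulEquiv G g).mapSubgroup.isCoatom_iff M |>.2 hM

end Counting

section Coatoms

variable {G : Type*} [Group G]

theorem lt_normalizer_inf_of_lt {D M : Subgroup G} [Group.IsNilpotent M] (h : D < M) :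
    D < normalizer (D : Set G) ⊓ M := by
  have hD : D.subgroupOf M < ⊤ := lt_top_iff_ne_top.2 fun h' => h.not_ge (subgroupOf_eq_top.1 h')
  have hlt := Group.normalizerCondition_of_isNilpotent _ hD
  rw [← subgroupOf_normalizer_eq h.le] at hlt
  rwa [← map_subtype_lt_map_subtype, subgroupOf_map_subtype, subgroupOf_map_subtype,
    inf_eq_left.2 h.le] at hlt

theorem zpowers_ne_top_of_not_isCyclic (hG : ¬ IsCyclic G) (g : G) : zpowers g ≠ ⊤ :=
  fun h => hG (isCyclic_iff_exists_zpowers_eq_top.2 ⟨g, h⟩)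

theorem exists_isCoatom_mem [IsCoatomic (Subgroup G)] (hG : ¬ IsCyclic G) (g : G) :
    ∃ M : Subgroup G, IsCoatom M ∧ g ∈ M := by
  obtain ⟨M, hM, hle⟩ :=
    (eq_top_or_exists_le_coatom (zpowers g)).resolve_left (zpowers_ne_top_of_not_isCyclic hG g)
  exact ⟨M, hM, hle (mem_zpowers g)⟩

theorem IsCoatom.ne_bot_of_not_isCyclic {M : Subgroup G} (hM : IsCoatom M) (hG : ¬ IsCyclic G) :
    M ≠ ⊥ := by
  rintro rfl
  refine hM.1 (eq_top_iff.2 fun g _ => ?_)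
  have : zpowers g = ⊥ :=
    not_bot_lt_iff.1 fun h => zpowers_ne_top_of_not_isCyclic hG g (hM.lt_iff.1 h)
  simpa [zpowers_eq_bot] using this

end Coatoms

namespace IsSimpleGroup

variable {G : Type*} [Group G] [IsSimpleGroup G]

theorem normalizer_ne_top {H : Subgroup G} (hbot : H ≠ ⊥) (htop : H ≠ ⊤) :
    normalizer (H : Set G) ≠ ⊤ := fun h =>
  (eq_bot_or_eq_top_of_normal H (normalizer_eq_top_iff.1 h)).elim hbot htop

theorem normalizer_eq_self_of_isCoatom {M : Subgroup G} (hM : IsCoatom M) (hbot : M ≠ ⊥) :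
    normalizer (M : Set G) = M :=
  (hM.le_iff.1 le_normalizer).resolve_left (normalizer_ne_top hbot hM.1)

variable [Finite G]

theorem inf_eq_bot_of_isCoatom (hnil : ∀ H : Subgroup G, H ≠ ⊤ → Group.IsNilpotent H)
    {M₁ M₂ : Subgroup G} (h₁ : IsCoatom M₁) (h₂ : IsCoatom M₂) (hne : M₁ ≠ M₂) :
    M₁ ⊓ M₂ = ⊥ := by
  suffices ∀ D : Subgroup G, ∀ M₁ M₂ : Subgroup G, IsCoatom M₁ → IsCoatom M₂ → M₁ ≠ M₂ →
      M₁ ⊓ M₂ = D → D = ⊥ from this _ M₁ M₂ h₁ h₂ hne rfl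
  intro D
  induction D using WellFoundedGT.induction with
  | _ D ih =>
    rintro M₁ M₂ h₁ h₂ hne rfl
    by_contra hbot
    have lt₁ : M₁ ⊓ M₂ < M₁ := inf_lt_left.2 fun h => hne ((h₁.le_iff.1 h).resolve_left h₂.1).symm
    have lt₂ : M₁ ⊓ M₂ < M₂ := inf_lt_right.2 fun h => hne ((h₂.le_iff.1 h).resolve_left h₁.1)
    obtain ⟨M₃, h₃, hN⟩ := (eq_top_or_exists_le_coatom (normalizer (M₁ ⊓ M₂ : Set G))).resolve_left
      (normalizer_ne_top hbot (lt₁.trans_le le_top).ne)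
    have eq₃ : ∀ M, IsCoatom M → M₁ ⊓ M₂ < M → M = M₃ := by
      intro M hM hlt
      by_contra hne₃
      have := hnil M hM.1
      have hlt₃ : M₁ ⊓ M₂ < M ⊓ M₃ :=
        (lt_normalizer_inf_of_lt hlt).trans_le (inf_comm M _ ▸ inf_le_inf_left M hN)
      exact not_lt_bot (ih _ hlt₃ M M₃ hM h₃ hne₃ rfl ▸ hlt₃)
    exact hne ((eq₃ M₁ h₁ lt₁).trans (eq₃ M₂ h₂ lt₂).symm)

theorem sum_conjugatesFinset_card_sub_one_of_isCoatom {M : Subgroup G} (hM : IsCoatom M)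
    (hbot : M ≠ ⊥) : ∑ K ∈ M.conjugatesFinset, (Nat.card K - 1) = Nat.card G - M.index := by
  rw [sum_conjugatesFinset_card_sub_one, normalizer_eq_self_of_isCoatom hM hbot, Nat.mul_sub_one,
    index_mul_card]

theorem isCyclic_of_forall_isNilpotent (hnil : ∀ H : Subgroup G, H ≠ ⊤ → Group.IsNilpotent H) :
    IsCyclic G := by
  classical
  by_contra hcyc
  have hsum {M : Subgroup G} (hM : IsCoatom M) :=
    sum_conjugatesFinset_card_sub_one_of_isCoatom hM (hM.ne_bot_of_not_isCyclic hcyc)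
  have hindex {M : Subgroup G} (hM : IsCoatom M) : 1 < M.index ∧ 2 * M.index ≤ Nat.card G :=
    ⟨one_lt_index_of_ne_top hM.1, two_mul_index_le_card (hM.ne_bot_of_not_isCyclic hcyc)⟩
  obtain ⟨M₁, h₁, -⟩ := exists_isCoatom_mem hcyc 1
  by_cases hall : ∀ M : Subgroup G, IsCoatom M → M ∈ M₁.conjugatesFinset
  · have := card_sub_one_le_sum_of_forall_mem (T := M₁.conjugatesFinset) fun x _ => by
      obtain ⟨M, hM, hx⟩ := exists_isCoatom_mem hcyc x
      exact ⟨M, hall M hM, hx⟩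
    have := hsum h₁
    have := hindex h₁
    omega
  push Not at hall
  obtain ⟨M₂, h₂, hM₂⟩ := hall
  have hcoatom : ∀ K ∈ M₁.conjugatesFinset ∪ M₂.conjugatesFinset, IsCoatom K := fun K hK =>
    (Finset.mem_union.1 hK).elim h₁.of_mem_conjugatesFinset h₂.of_mem_conjugatesFinset
  have := sum_card_sub_one_le_of_pairwise_inf_eq_bot fun K hK L hL =>
    inf_eq_bot_of_isCoatom hnil (hcoatom K hK) (hcoatom L hL)
  rw [Finset.sum_union (disjoint_conjugatesFinset hM₂), hsum h₁, hsum h₂] at this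
  have := hindex h₁
  have := hindex h₂
  omega

end IsSimpleGroup

/-- Every finite meta-Nil-Hamiltonian group is soluble. -/
theorem stmt_8 {G : Type*} [Group G] [Finite G] (hmeta : MetaNilHamiltonian G) :
    IsSolvable G :=
  isSolvable_of_forall_isSimpleGroup (P := fun G _ => MetaNilHamiltonian G)
    (fun N _ hG => hG.of_injective N.subtype N.subtype_injective)
    (fun N _ hG => hG.of_surjective (QuotientGroup.mk' N) (QuotientGroup.mk'_surjective N))
    (fun hG => by
      have := IsSimpleGroup.isCyclic_of_forall_isNilpotent fun _ => hG.isNilpotent_of_ne_top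
      exact Group.isSolvable_of_comm IsCyclic.isMulCommutative.is_comm.comm)
    hmeta
end

section
/- Let G be a para-Nil-Hamiltonian group and let X be a subgroup of G which is neither normal in G nor nilpotent. Then X is a maximal subgroup of its normal closure X^G. Furthermore, if X is finite and G is locally graded, then (i) the normal closure X^G is finite, and (ii) either X is normal in X^G or G is finite. -/
/-!
A subgroup properly containing `X` is neither nilpotent nor minimal non-nilpotent (its proper
subgroup `X` is not nilpotent), so it is normal and contains `X^G`: thus `X` is maximal in `X^G`.

If `X` is finite, a conjugate `X^c ⊄ X` gives `X^G = ⟨X, X^c⟩`, which is finitely generated.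
Let `H` be a finitely generated locally graded group with a finite maximal subgroup `X`. If `H`
is infinite, every normal subgroup `M` of finite index satisfies `XM = H`, so `|H : M| ≤ |X|`.
A normal subgroup of finite index of largest index then lies in all the others, so it is
trivial (otherwise local gradedness gives it a proper subgroup of finite index, whose normal
core in `H` does not contain it), and `H` is finite after all. Applied to `H = X^G`, this shows
that `X^G` is finite.

If moreover `X` is not normal in `X^G`, then `N_G(X) = X`, and `|G : N_G(X)|` is the number of
conjugates of `X`, all of them subgroups of the finite group `X^G`.
-/

open scoped Pointwise

namespace Subgroup

variable {G : Type*} [Group G]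

theorem isNilpotent_of_le {A B : Subgroup G} (h : A ≤ B) [Group.IsNilpotent B] :
    Group.IsNilpotent A :=
  Group.nilpotent_of_mulEquiv (subgroupOfEquivOfLe h)

theorem index_le_card_of_sup_eq_top {X M : Subgroup G} [M.Normal] [Finite X] (h : X ⊔ M = ⊤) :
    M.index ≤ Nat.card X := by
  rw [← relIndex_top_right, ← h, relIndex_sup_right]
  exact Nat.le_of_dvd Nat.card_pos (relIndex_dvd_card M X)

theorem le_map_subtype_iff {N : Subgroup G} {K : Subgroup N} :
    N ≤ K.map N.subtype ↔ K = ⊤ := by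
  rw [eq_top_iff, ← map_subtype_le_map_subtype, ← MonoidHom.range_eq_map, range_subtype]

theorem lt_normalClosure {X : Subgroup G} (hX : ¬ X.Normal) : X < normalClosure (X : Set G) :=
  le_normalClosure.lt_of_ne fun h => hX (h ▸ normalClosure_normal)

theorem isCoatom_subgroupOf {X N : Subgroup G} (hXN : X < N) (h : ∀ Z, X < Z → N ≤ Z) :
    IsCoatom (X.subgroupOf N) := by
  refine ⟨fun htop => hXN.not_ge (subgroupOf_eq_top.mp htop), fun Z hZ => ?_⟩
  rw [← map_subtype_lt_map_subtype, subgroupOf_map_subtype, inf_eq_left.mpr hXN.le] at hZ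
  exact le_map_subtype_iff.mp (h _ hZ)

theorem exists_conjAct_smul_not_le {X : Subgroup G} (hX : ¬ X.Normal) :
    ∃ c : ConjAct G, ¬ c • X ≤ X := by
  by_contra! h
  refine hX ⟨fun n hn g => ?_⟩
  simpa [ConjAct.toConjAct_smul] using
    h (ConjAct.toConjAct g) (smul_mem_pointwise_smul n _ X hn)

theorem conjAct_smul_le_normalClosure (X : Subgroup G) (c : ConjAct G) :
    c • X ≤ normalClosure (X : Set G) :=
  calc c • X ≤ c • normalClosure (X : Set G) :=
        pointwise_smul_le_pointwise_smul_iff.mpr le_normalClosure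
    _ = normalClosure (X : Set G) := normalClosure_normal.conjAct c

theorem finiteIndex_normalizer_of_finite_normalClosure (X : Subgroup G)
    [Finite (normalClosure (X : Set G))] : (normalizer (X : Set G)).FiniteIndex := by
  have hstab : normalizer (X : Set G) = (MulAction.stabilizer (ConjAct G) X).comap
      (ConjAct.toConjAct : G ≃* ConjAct G).toMonoidHom := by
    ext g
    exact conjAct_pointwise_smul_iff.symm
  have horbit : (MulAction.orbit (ConjAct G) X).Finite := by
    refine ((Set.toFinite (normalClosure (X : Set G) : Set G)).finite_subsets.preimage
      SetLike.coe_injective.injOn).subset ?_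
    rintro _ ⟨c, rfl⟩
    exact conjAct_smul_le_normalClosure X c
  rw [hstab]
  refine ⟨?_⟩
  rw [index_comap_of_surjective _ ConjAct.toConjAct.surjective, MulAction.index_stabilizer]
  exact ((Set.ncard_pos horbit).mpr ⟨X, MulAction.mem_orbit_self X⟩).ne'

theorem exists_normal_finiteIndex_le_of_index_le {H : Type*} [Group H] (n : ℕ)
    (hbound : ∀ M : Subgroup H, M.Normal → M.FiniteIndex → M.index ≤ n) :
    ∃ M₀ : Subgroup H, M₀.Normal ∧ M₀.FiniteIndex ∧
      ∀ L : Subgroup H, L.Normal → L.FiniteIndex → M₀ ≤ L := by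
  set S := {M : Subgroup H | M.Normal ∧ M.FiniteIndex}
  have hne : (index '' S).Nonempty := ⟨_, ⊤, ⟨normal_top, inferInstance⟩, rfl⟩
  have hbdd : BddAbove (index '' S) := by
    refine ⟨n, ?_⟩
    rintro _ ⟨M, hM, rfl⟩
    exact hbound M hM.1 hM.2
  obtain ⟨M₀, ⟨hM₀n, hM₀fi⟩, hM₀⟩ := Nat.sSup_mem hne hbdd
  refine ⟨M₀, hM₀n, hM₀fi, fun L hLn hLfi => ?_⟩
  have hmax : (M₀ ⊓ L).index ≤ M₀.index :=
    hM₀ ▸ le_csSup hbdd ⟨_, ⟨normal_inf_normal M₀ L, inferInstance⟩, rfl⟩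
  by_contra hML
  exact (index_strictAnti (inf_lt_left.mpr hML)).not_ge hmax

end Subgroup

theorem MinimalNonNilpotent.eq_of_le {G : Type*} [Group G] {A B : Subgroup G}
    (hB : MinimalNonNilpotent B) (h : A ≤ B) (hA : ¬ Group.IsNilpotent A) : A = B := by
  by_contra hne
  have hsub : A.subgroupOf B ≠ ⊤ := fun htop =>
    hne (le_antisymm h (Subgroup.subgroupOf_eq_top.mp htop))
  have := hB.2 _ hsub
  exact hA (Group.nilpotent_of_mulEquiv (Subgroup.subgroupOfEquivOfLe h))

theorem ParaNilHamiltonian.normal_of_lt {G : Type*} [Group G] (hG : ParaNilHamiltonian G)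
    {X Z : Subgroup G} (hX : ¬ Group.IsNilpotent X) (hXZ : X < Z) : Z.Normal := by
  by_contra hZ
  rcases hG.2 Z hZ with hnil | hmin
  · exact hX (Subgroup.isNilpotent_of_le hXZ.le)
  · exact hXZ.ne (hmin.eq_of_le hXZ.le hX)

theorem ParaNilHamiltonian.normalClosure_le_of_lt {G : Type*} [Group G]
    (hG : ParaNilHamiltonian G) {X Z : Subgroup G} (hX : ¬ Group.IsNilpotent X) (hXZ : X < Z) :
    Subgroup.normalClosure (X : Set G) ≤ Z :=
  have := hG.normal_of_lt hX hXZ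
  Subgroup.normalClosure_le_normal hXZ.le

theorem LocallyGraded.of_injective {G H : Type*} [Group G] [Group H] (hG : LocallyGraded G)
    (f : H →* G) (hf : Function.Injective f) : LocallyGraded H := by
  intro K hK hKfg
  let e : K ≃* K.map f := K.equivMapOfInjective f hf
  obtain ⟨L, hL, hLfi⟩ := hG (K.map f) ((Subgroup.map_eq_bot_iff_of_injective K hf).not.mpr hK)
    (Group.fg_of_surjective (f := e.toMonoidHom) e.surjective)
  refine ⟨L.comap e.toMonoidHom, ?_, ⟨?_⟩⟩
  · rwa [Ne, ← Subgroup.comap_top e.toMonoidHom, (Subgroup.comap_injective e.surjective).eq_iff]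
  · rw [Subgroup.index_comap_of_surjective _ e.surjective]
    exact hLfi.index_ne_zero

theorem LocallyGraded.finite_of_index_le {H : Type*} [Group H] [Group.FG H]
    (hH : LocallyGraded H) (n : ℕ)
    (hbound : ∀ M : Subgroup H, M.Normal → M.FiniteIndex → M.index ≤ n) : Finite H := by
  obtain ⟨M₀, -, hM₀fi, hM₀⟩ := Subgroup.exists_normal_finiteIndex_le_of_index_le n hbound
  suffices M₀ = ⊥ by
    subst this
    exact Nat.finite_of_card_ne_zero (Subgroup.index_bot (G := H) ▸ hM₀fi.index_ne_zero)
  by_contra hbot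
  obtain ⟨K, hK, hKfi⟩ := hH M₀ hbot inferInstance
  have : (K.map M₀.subtype).FiniteIndex := by
    refine ⟨?_⟩
    rw [Subgroup.index_map_subtype]
    exact mul_ne_zero hKfi.index_ne_zero hM₀fi.index_ne_zero
  exact hK (Subgroup.le_map_subtype_iff.mp
    ((hM₀ _ (Subgroup.normalCore_normal _) inferInstance).trans (Subgroup.normalCore_le _)))

theorem LocallyGraded.finite_of_isCoatom {H : Type*} [Group H] [Group.FG H]
    (hH : LocallyGraded H) {X : Subgroup H} [Finite X] (hX : IsCoatom X) : Finite H := by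
  by_contra hinf
  refine hinf (hH.finite_of_index_le (Nat.card X) fun M _ hMfi =>
    Subgroup.index_le_card_of_sup_eq_top (hX.2 _ (left_lt_sup.mpr fun hMX => hinf ?_)))
  have : Finite M := Finite.of_injective _ (Subgroup.inclusion_injective hMX)
  exact (Subgroup.finite_iff_finite_and_finiteIndex M).mpr ⟨this, hMfi⟩

theorem LocallyGraded.finite_normalClosure {G : Type*} [Group G] (hG : LocallyGraded G)
    {X : Subgroup G} [Finite X] (hXn : ¬ X.Normal)
    (hle : ∀ Z, X < Z → Subgroup.normalClosure (X : Set G) ≤ Z) :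
    Finite (Subgroup.normalClosure (X : Set G)) := by
  set N := Subgroup.normalClosure (X : Set G)
  have hXN : X < N := Subgroup.lt_normalClosure hXn
  obtain ⟨c, hc⟩ := Subgroup.exists_conjAct_smul_not_le hXn
  have hN : N = X ⊔ c • X := le_antisymm (hle _ (left_lt_sup.mpr hc))
    (sup_le hXN.le (Subgroup.conjAct_smul_le_normalClosure X c))
  have : Finite (c • X : Subgroup G) := Finite.of_equiv _ (Subgroup.equivSMul c X).toEquiv
  have : Group.FG N := (Group.fg_iff_subgroup_fg N).mpr (hN ▸ .sup
    ((Group.fg_iff_subgroup_fg X).mp inferInstance)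
    ((Group.fg_iff_subgroup_fg (c • X : Subgroup G)).mp inferInstance))
  have : Finite (X.subgroupOf N) :=
    Finite.of_equiv _ (Subgroup.subgroupOfEquivOfLe hXN.le).symm.toEquiv
  exact (hG.of_injective N.subtype N.subtype_injective).finite_of_isCoatom
    (Subgroup.isCoatom_subgroupOf hXN hle)

/-- In a para-Nil-Hamiltonian group $G$, a subgroup $X$ which is neither normal nor
nilpotent is maximal in its normal closure $X^G$; moreover if $X$ is finite and $G$
is locally graded, then $X^G$ is finite and either $X \trianglelefteq X^G$ or $G$ is finite. -/
theorem stmt_11 {G : Type*} [Group G] (hpara : ParaNilHamiltonian G) (X : Subgroup G)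
    (hXnn : ¬ X.Normal) (hXnil : ¬ Group.IsNilpotent X) :
    IsCoatom (X.subgroupOf (Subgroup.normalClosure (X : Set G))) ∧
    (Finite X → LocallyGraded G →
      Finite (Subgroup.normalClosure (X : Set G)) ∧
      ((X.subgroupOf (Subgroup.normalClosure (X : Set G))).Normal ∨ Finite G)) := by
  set N := Subgroup.normalClosure (X : Set G)
  have hXN : X < N := Subgroup.lt_normalClosure hXnn
  have hle : ∀ Z, X < Z → N ≤ Z := fun Z => hpara.normalClosure_le_of_lt hXnil
  have hco := Subgroup.isCoatom_subgroupOf hXN hle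
  refine ⟨hco, fun hXfin hlg => ?_⟩
  have hNfin : Finite N := hlg.finite_normalClosure hXnn hle
  refine ⟨hNfin, or_iff_not_imp_left.mpr fun hnorm => ?_⟩
  have hself : Subgroup.normalizer (X : Set G) = X := by
    by_contra hne
    exact hnorm ((Subgroup.normal_subgroupOf_iff_le_normalizer hXN.le).mpr
      (hle _ (Subgroup.le_normalizer.lt_of_ne (Ne.symm hne))))
  have := Subgroup.finiteIndex_normalizer_of_finite_normalClosure X
  rw [hself] at this
  exact (Subgroup.finite_iff_finite_and_finiteIndex X).mpr ⟨hXfin, this⟩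
end

section
/- Let G be a biminimal non-nilpotent group which is locally nilpotent. Then G is meta-Nil-Hamiltonian, i.e., every non-nilpotent subgroup of G is normal in G. -/
namespace Subgroup

variable {G : Type*} [Group G]

theorem isCompactElement_closure_singleton (x : G) : IsCompactElement (closure {x}) := by
  rw [CompleteLattice.isCompactElement_iff_le_of_directed_sSup_le]
  intro s hne hdir hle
  obtain ⟨K, hK, hx⟩ := (mem_sSup_of_directedOn hne hdir).mp (hle (subset_closure rfl))
  exact ⟨K, hK, (closure_le _).mpr (Set.singleton_subset_iff.mpr hx)⟩

theorem isCompactElement_closure_finset (s : Finset G) :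
    IsCompactElement (closure (s : Set G)) := by
  have hs : closure (s : Set G) = s.sup fun x ↦ closure {x} :=
    le_antisymm ((closure_le _).mpr fun x hx ↦ Finset.le_sup (f := fun x ↦ closure {x}) hx
      (subset_closure rfl))
      (Finset.sup_le fun x hx ↦ closure_mono (Set.singleton_subset_iff.mpr hx))
  rw [hs]
  exact CompleteLattice.isCompactElement_finsetSup s fun x _ ↦
    isCompactElement_closure_singleton x

instance isCoatomic_of_fg [hG : Group.FG G] : IsCoatomic (Subgroup G) := by
  obtain ⟨s, hs⟩ := hG.out
  exact CompleteLattice.coatomic_of_top_compact (hs ▸ isCompactElement_closure_finset s)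

theorem normalClosure_ne_top [Group.FG G] [Group.IsNilpotent G] {K : Subgroup G}
    (hK : K ≠ ⊤) : normalClosure (K : Set G) ≠ ⊤ := by
  obtain ⟨P, hP, hKP⟩ := (eq_top_or_exists_le_coatom K).resolve_left hK
  have := NormalizerCondition.normal_of_coatom P Group.normalizerCondition_of_isNilpotent hP
  exact ne_top_of_le_ne_top hP.1 (normalClosure_le_normal hKP)

theorem exists_finset_subset_of_mem_closure {s : Set G} {x : G} (hx : x ∈ closure s) :
    ∃ t : Finset G, (t : Set G) ⊆ s ∧ x ∈ closure (t : Set G) := by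
  classical
  induction hx using closure_induction with
  | mem x hx => exact ⟨{x}, by simpa using hx, subset_closure (by simp)⟩
  | one => exact ⟨∅, by simp, one_mem _⟩
  | mul x y _ _ hx hy =>
    obtain ⟨t, hts, hxt⟩ := hx
    obtain ⟨u, hus, hyu⟩ := hy
    refine ⟨t ∪ u, by simpa using ⟨hts, hus⟩, mul_mem ?_ ?_⟩
    · exact closure_mono (by simp) hxt
    · exact closure_mono (by simp) hyu
  | inv x _ hx =>
    obtain ⟨t, hts, hxt⟩ := hx
    exact ⟨t, hts, inv_mem hxt⟩

theorem isCoatom_of_not_isNilpotent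
    (hsub : ∀ H : Subgroup G, H ≠ ⊤ → Group.IsNilpotent H ∨ MinimalNonNilpotent H)
    {H : Subgroup G} (hH : ¬ Group.IsNilpotent H) (htop : H ≠ ⊤) : IsCoatom H := by
  refine ⟨htop, fun K hHK ↦ by_contra fun hK ↦ hH ?_⟩
  have : Group.IsNilpotent (H.subgroupOf K) := by
    rcases hsub K hK with hKnil | hKmin
    · infer_instance
    · exact hKmin.2 _ fun h ↦ hHK.not_ge (subgroupOf_eq_top.mp h)
  exact (Group.isNilpotent_congr (subgroupOfEquivOfLe hHK.le)).mp this

end Subgroup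

namespace LocallyNilpotent

open Subgroup

variable {G : Type*} [Group G]

theorem mem_of_mem_closure_conj (hln : LocallyNilpotent G) {M : Subgroup G} {m g : G}
    {t : Finset G} (hm : m ∈ M) (hts : (t : Set G) ⊆ M ∪ {g * m * g⁻¹})
    (hgt : g ∈ closure (t : Set G)) : g ∈ M := by
  classical
  by_contra hg
  set F := closure ((insert g (insert m t) : Finset G) : Set G)
  have hF : ∀ x ∈ insert g (insert m t), x ∈ F := fun x hx ↦ subset_closure hx
  have := hln F inferInstance
  refine normalClosure_ne_top (K := M.subgroupOf F)
    (fun h ↦ hg (subgroupOf_eq_top.mp h (hF g (by simp)))) ?_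
  set N := (normalClosure (M.subgroupOf F : Set F)).map F.subtype
  have hMN : ∀ x ∈ F, x ∈ M → x ∈ N := fun x hxF hxM ↦
    ⟨⟨x, hxF⟩, le_normalClosure (mem_subgroupOf.mpr hxM), rfl⟩
  have hcN : g * m * g⁻¹ ∈ N :=
    ⟨_, normalClosure_normal.conj_mem ⟨m, hF m (by simp)⟩
      (le_normalClosure (mem_subgroupOf.mpr hm)) ⟨g, hF g (by simp)⟩, rfl⟩
  have htN : ∀ x ∈ t, x ∈ N := fun x hx ↦ by
    rcases hts hx with hxM | rfl
    · exact hMN x (hF x (by simp [hx])) hxM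
    · exact hcN
  have hgN : g ∈ N := (closure_le N).mpr htN hgt
  rw [eq_top_iff, ← map_subtype_le_map_subtype, ← MonoidHom.range_eq_map, range_subtype]
  refine (closure_le N).mpr fun x hx ↦ ?_
  simp only [Finset.coe_insert, Set.mem_insert_iff, Finset.mem_coe] at hx
  rcases hx with rfl | rfl | hx
  · exact hgN
  · exact hMN x (hF x (by simp)) hm
  · exact htN x hx

theorem normal_of_isCoatom (hln : LocallyNilpotent G) {M : Subgroup G} (hM : IsCoatom M) :
    M.Normal := by
  by_contra hnormal
  obtain ⟨m, hm, g, hc⟩ : ∃ m ∈ M, ∃ g : G, g * m * g⁻¹ ∉ M := by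
    by_contra! h
    exact hnormal ⟨h⟩
  have hgen : g ∈ closure (M ∪ {g * m * g⁻¹}) := by
    rw [Subgroup.closure_union, closure_eq, hM.2 _ (left_lt_sup.mpr (by simpa using hc))]
    exact mem_top g
  obtain ⟨t, hts, hgt⟩ := exists_finset_subset_of_mem_closure hgen
  have hg : g ∈ M := hln.mem_of_mem_closure_conj hm hts hgt
  exact hc (M.mul_mem (M.mul_mem hg hm) (M.inv_mem hg))

end LocallyNilpotent

/-- A biminimal non-nilpotent locally nilpotent group is meta-Nil-Hamiltonian:
every non-nilpotent subgroup of it is normal. -/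
theorem stmt_17 {G : Type*} [Group G] (hbi : BiminimalNonNilpotent G)
    (hln : LocallyNilpotent G) :
    MetaNilHamiltonian G := by
  intro H hH
  by_cases htop : H = ⊤
  · subst htop
    infer_instance
  · exact hln.normal_of_isCoatom (Subgroup.isCoatom_of_not_isNilpotent hbi.2.2 hH htop)
end
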